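/- arXiv:0904.1049 — 3 statements merged into one kernel-verified Lean document; each statement's English description precedes it below -/
import Mathlib

section
/- For positive numbers s ≠ t, the inequality (ln Γ(t) - ln Γ(s))/(t-s) ≥ ψ(L(s,t)) holds, where L(s,t) = (t-s)/(ln t - ln s) is the logarithmic mean. -/
open Real Set Filter Finset

noncomputable def psi (x : ℝ) : ℝ := deriv (fun t => Real.log (Real.Gamma t)) x

lemma logGamma_hasDeriv {x : ℝ} (hx : 0 < x) :
    HasDerivAt (fun t => Real.log (Real.Gamma t)) (psi x) x := by
  have h1 : DifferentiableAt ℝ Real.Gamma x :=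
    Real.differentiableAt_Gamma (fun m => by
      have : (0:ℝ) ≤ m := Nat.cast_nonneg m
      intro h; rw [h] at hx; linarith)
  have h2 : DifferentiableAt ℝ (fun t => Real.log (Real.Gamma t)) x :=
    h1.log (Real.Gamma_pos_of_pos hx).ne'
  exact h2.hasDerivAt

lemma psi_add_one {x : ℝ} (hx : 0 < x) : psi (x + 1) = psi x + 1 / x := by
  have heq : (fun t => Real.log (Real.Gamma (t + 1)))
      =ᶠ[nhds x] fun t => Real.log t + Real.log (Real.Gamma t) := by
    filter_upwards [eventually_gt_nhds hx] with t ht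
    rw [Real.Gamma_add_one ht.ne', Real.log_mul ht.ne' (Real.Gamma_pos_of_pos ht).ne']
  have h1 : HasDerivAt (fun t : ℝ => Real.log (Real.Gamma (t + 1))) (psi (x + 1) * 1) x :=
    by have h := (logGamma_hasDeriv (by linarith : (0:ℝ) < x + 1)).comp x
         ((hasDerivAt_id x).add_const 1); exact h
  have h2 : HasDerivAt (fun t : ℝ => Real.log t + Real.log (Real.Gamma t)) (x⁻¹ + psi x) x :=
    (Real.hasDerivAt_log hx.ne').add (logGamma_hasDeriv hx)
  have h3 : HasDerivAt (fun t : ℝ => Real.log (Real.Gamma (t + 1))) (x⁻¹ + psi x) x :=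
    h2.congr_of_eventuallyEq heq
  have h4 := h1.unique h3
  rw [mul_one] at h4
  rw [h4, one_div]; ring

lemma psi_add_nat {x : ℝ} (hx : 0 < x) (n : ℕ) :
    psi (x + n) = psi x + ∑ k ∈ Finset.range n, 1 / (x + k) := by
  induction n with
  | zero => simp
  | succ n ih =>
    have hxn : (0:ℝ) < x + n := by positivity
    have h : x + ((n:ℕ) + 1 : ℕ) = (x + n) + 1 := by push_cast; ring
    rw [h, psi_add_one hxn, ih, Finset.sum_range_succ]
    ring

lemma logGamma_add_nat {x : ℝ} (hx : 0 < x) (n : ℕ) :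
    Real.log (Real.Gamma (x + n)) =
      Real.log (Real.Gamma x) + ∑ k ∈ Finset.range n, Real.log (x + k) := by
  induction n with
  | zero => simp
  | succ n ih =>
    have hxn : (0:ℝ) < x + n := by positivity
    have h : x + ((n:ℕ) + 1 : ℕ) = (x + n) + 1 := by push_cast; ring
    rw [h, Real.Gamma_add_one hxn.ne', Real.log_mul hxn.ne'
      (Real.Gamma_pos_of_pos hxn).ne', ih, Finset.sum_range_succ]
    ring

lemma two_log_le {r : ℝ} (hr : 1 ≤ r) : 2 * Real.log r ≤ r - 1 / r := by
  have hd : ∀ y : ℝ, 0 < y → HasDerivAt (fun z : ℝ => z - 1 / z - 2 * Real.log z)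
      (1 - (-(y ^ 2)⁻¹) - 2 * y⁻¹) y := by
    intro y hy
    have hy0 : y ≠ 0 := ne_of_gt hy
    have h1 : HasDerivAt (fun z : ℝ => 1 / z) (-(y ^ 2)⁻¹) y := by
      simpa [one_div] using hasDerivAt_inv hy0
    exact ((hasDerivAt_id y).sub h1).sub ((Real.hasDerivAt_log hy0).const_mul 2)
  have mono : MonotoneOn (fun z : ℝ => z - 1 / z - 2 * Real.log z) (Set.Ici 1) := by
    apply monotoneOn_of_deriv_nonneg (convex_Ici 1)
    · intro y hy
      have hy0 : (0:ℝ) < y := lt_of_lt_of_le one_pos hy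
      exact (hd y hy0).continuousAt.continuousWithinAt
    · intro y hy
      rw [interior_Ici] at hy
      exact (hd y (lt_trans one_pos hy)).differentiableAt.differentiableWithinAt
    · intro y hy
      rw [interior_Ici] at hy
      have hy0 : (0:ℝ) < y := lt_trans one_pos hy
      rw [(hd y hy0).deriv]
      have h2 : 1 - (-(y ^ 2)⁻¹) - 2 * y⁻¹ = (1 - y⁻¹) ^ 2 := by
        field_simp; ring
      rw [h2]; positivity
  have := mono (self_mem_Ici) (show r ∈ Set.Ici (1:ℝ) from hr) hr
  simp only [Real.log_one] at this
  linarith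

lemma log_le_sub_div_sqrt {x y : ℝ} (hx : 0 < x) (hxy : x < y) :
    Real.sqrt (x * y) * (Real.log y - Real.log x) ≤ y - x := by
  have hy : 0 < y := lt_trans hx hxy
  set r := Real.sqrt (y / x) with hr
  have hr1 : 1 ≤ r := Real.one_le_sqrt.mpr ((one_le_div hx).mpr hxy.le)
  have hlog : 2 * Real.log r = Real.log y - Real.log x := by
    rw [hr, Real.log_sqrt (by positivity), Real.log_div hy.ne' hx.ne']; ring
  have h1 : Real.sqrt (x * y) * r = y := by
    rw [hr, ← Real.sqrt_mul (by positivity)]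
    rw [show x * y * (y / x) = y ^ 2 by field_simp]
    exact Real.sqrt_sq hy.le
  have h2 : Real.sqrt (x * y) * (1 / r) = x := by
    rw [hr, one_div, ← Real.sqrt_inv, ← Real.sqrt_mul (by positivity)]
    rw [show x * y * (y / x)⁻¹ = x ^ 2 by field_simp]
    exact Real.sqrt_sq hx.le
  have hkey := two_log_le hr1
  have hsn : (0:ℝ) ≤ Real.sqrt (x * y) := Real.sqrt_nonneg _
  calc Real.sqrt (x * y) * (Real.log y - Real.log x)
      = Real.sqrt (x * y) * (2 * Real.log r) := by rw [hlog]
    _ ≤ Real.sqrt (x * y) * (r - 1 / r) := mul_le_mul_of_nonneg_left hkey hsn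
    _ = y - x := by rw [mul_sub, h1, h2]

/-- shift inequality for the logarithmic mean: `L(s+c,t+c) ≥ L(s,t)+c`. -/
lemma Lshift {s t : ℝ} (hs : 0 < s) (hst : s < t) {c : ℝ} (hc : 0 ≤ c) :
    (t - s) / (Real.log t - Real.log s) + c
      ≤ (t - s) / (Real.log (t + c) - Real.log (s + c)) := by
  have ht : 0 < t := lt_trans hs hst
  -- derivative setup for φ c = (t-s)/(log(t+c)-log(s+c)) - c
  have hder : ∀ c : ℝ, 0 ≤ c →
      HasDerivAt (fun c : ℝ => (t - s) / (Real.log (t + c) - Real.log (s + c)) - c)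
        ((0 * (Real.log (t + c) - Real.log (s + c)) -
           (t - s) * ((t + c)⁻¹ * 1 - (s + c)⁻¹ * 1)) /
          (Real.log (t + c) - Real.log (s + c)) ^ 2 - 1) c := by
    intro c hc0
    have hsc : (0:ℝ) < s + c := by linarith
    have htc : (0:ℝ) < t + c := by linarith
    have hu : (0:ℝ) < Real.log (t + c) - Real.log (s + c) :=
      sub_pos.mpr (Real.log_lt_log hsc (by linarith))
    have hg1 : HasDerivAt (fun c : ℝ => Real.log (t + c)) ((t + c)⁻¹ * 1) c :=
      (Real.hasDerivAt_log htc.ne').comp c ((hasDerivAt_id c).const_add t)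
    have hg2 : HasDerivAt (fun c : ℝ => Real.log (s + c)) ((s + c)⁻¹ * 1) c :=
      (Real.hasDerivAt_log hsc.ne').comp c ((hasDerivAt_id c).const_add s)
    exact (((hasDerivAt_const c (t - s)).div (hg1.sub hg2) hu.ne')).sub (hasDerivAt_id c)
  have mono : MonotoneOn (fun c : ℝ => (t - s) / (Real.log (t + c) - Real.log (s + c)) - c)
      (Set.Ici 0) := by
    apply monotoneOn_of_deriv_nonneg (convex_Ici 0)
    · intro c hc0
      exact (hder c hc0).continuousAt.continuousWithinAt
    · intro c hc0
      rw [interior_Ici] at hc0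
      exact (hder c hc0.le).differentiableAt.differentiableWithinAt
    · intro c hc0
      rw [interior_Ici] at hc0
      have hcp : (0:ℝ) < c := hc0
      rw [(hder c hcp.le).deriv]
      have hsc : (0:ℝ) < s + c := by linarith
      have htc : (0:ℝ) < t + c := by linarith
      have hu : (0:ℝ) < Real.log (t + c) - Real.log (s + c) :=
        sub_pos.mpr (Real.log_lt_log hsc (by linarith))
      set u := Real.log (t + c) - Real.log (s + c) with hu'
      have hkey : Real.sqrt ((s + c) * (t + c)) * u ≤ t - s := by
        have := log_le_sub_div_sqrt hsc (show s + c < t + c by linarith)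
        calc Real.sqrt ((s + c) * (t + c)) * u
            = Real.sqrt ((s + c) * (t + c)) * (Real.log (t + c) - Real.log (s + c)) := rfl
          _ ≤ (t + c) - (s + c) := this
          _ = t - s := by ring
      have hsq : (s + c) * (t + c) * u ^ 2 ≤ (t - s) ^ 2 := by
        have h0 : (0:ℝ) ≤ Real.sqrt ((s + c) * (t + c)) * u :=
          mul_nonneg (Real.sqrt_nonneg _) hu.le
        have h1 := mul_self_le_mul_self h0 hkey
        have h2 : Real.sqrt ((s + c) * (t + c)) * Real.sqrt ((s + c) * (t + c))
            = (s + c) * (t + c) := Real.mul_self_sqrt (by positivity)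
        nlinarith [h1, h2]
      have halg : (0 * u - (t - s) * ((t + c)⁻¹ * 1 - (s + c)⁻¹ * 1)) / u ^ 2
          = (t - s) ^ 2 / ((s + c) * (t + c) * u ^ 2) := by
        rw [div_eq_div_iff (by positivity) (by positivity)]
        field_simp
        ring
      rw [halg]
      have : (1:ℝ) ≤ (t - s) ^ 2 / ((s + c) * (t + c) * u ^ 2) :=
        (one_le_div (by positivity)).mpr hsq
      linarith
  have h := mono (self_mem_Ici) (show c ∈ Set.Ici (0:ℝ) from hc) hc
  simp only [add_zero, sub_zero] at h
  linarith

lemma core {s t : ℝ} (hs : 0 < s) (hst : s < t) :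
    psi ((t - s) / (Real.log t - Real.log s)) ≤
      (Real.log (Real.Gamma t) - Real.log (Real.Gamma s)) / (t - s) := by
  have ht : 0 < t := lt_trans hs hst
  have hts : 0 < t - s := sub_pos.mpr hst
  have hlogst : 0 < Real.log t - Real.log s := sub_pos.mpr (Real.log_lt_log hs hst)
  set L := (t - s) / (Real.log t - Real.log s) with hLdef
  set D := (Real.log (Real.Gamma t) - Real.log (Real.Gamma s)) / (t - s) with hDdef
  have hsL : s < L := by
    rw [hLdef, lt_div_iff₀ hlogst]
    have hts1 : (0:ℝ) < t / s := by positivity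
    have hne : t / s ≠ 1 := ((one_lt_div hs).mpr hst).ne'
    have h := Real.log_lt_sub_one_of_pos hts1 hne
    rw [Real.log_div ht.ne' hs.ne'] at h
    have h2 := mul_lt_mul_of_pos_left h hs
    have h3 : s * (t / s - 1) = t - s := by field_simp
    linarith
  have hLt : L < t := by
    rw [hLdef, div_lt_iff₀ hlogst]
    have hst1 : (0:ℝ) < s / t := by positivity
    have hne : s / t ≠ 1 := ((div_lt_one ht).mpr hst).ne
    have h := Real.log_lt_sub_one_of_pos hst1 hne
    rw [Real.log_div hs.ne' ht.ne'] at h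
    have h2 := mul_lt_mul_of_pos_left h ht
    have h3 : t * (s / t - 1) = s - t := by field_simp
    nlinarith
  have hL0 : 0 < L := lt_trans hs hsL
  -- key estimate for every n
  have key : ∀ n : ℕ, Real.log (s + n) - Real.log (L + (n + 1)) ≤ D - psi L := by
    intro n
    set m : ℕ := n + 1 with hm
    have hmr : ((m:ℕ):ℝ) = (n:ℝ) + 1 := by rw [hm]; push_cast; ring
    have hsm : (0:ℝ) < s + m := by positivity
    have htm : (0:ℝ) < t + m := by positivity
    have hLm : (0:ℝ) < L + m := by positivity
    -- e1 : shifted difference quotient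
    have e1 : (Real.log (Real.Gamma (t + m)) - Real.log (Real.Gamma (s + m))) / (t - s)
        = D + ∑ k ∈ Finset.range m, (Real.log (t + k) - Real.log (s + k)) / (t - s) := by
      rw [logGamma_add_nat ht m, logGamma_add_nat hs m, ← Finset.sum_div,
        Finset.sum_sub_distrib, hDdef, ← add_div]
      congr 1
      ring
    -- e2 : psi recurrence at L
    have e2 : psi (L + m) = psi L + ∑ k ∈ Finset.range m, 1 / (L + k) := psi_add_nat hL0 m
    -- termwise comparison
    have hterm : ∀ k ∈ Finset.range m,
        (Real.log (t + k) - Real.log (s + k)) / (t - s) ≤ 1 / (L + k) := by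
      intro k _
      have hk0 : (0:ℝ) ≤ (k:ℝ) := Nat.cast_nonneg k
      have hsk : (0:ℝ) < s + k := by positivity
      have huk : (0:ℝ) < Real.log (t + k) - Real.log (s + k) :=
        sub_pos.mpr (Real.log_lt_log hsk (by linarith))
      have hLk : (0:ℝ) < L + k := by positivity
      have h := Lshift hs hst hk0
      rw [← hLdef] at h
      have h2 : (L + k) * (Real.log (t + k) - Real.log (s + k)) ≤ t - s :=
        (le_div_iff₀ huk).mp h
      rw [div_le_div_iff₀ hts hLk]
      nlinarith
    have hsum := Finset.sum_le_sum hterm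
    -- convexity bounds
    have h3 : psi (s + m) ≤
        (Real.log (Real.Gamma (t + m)) - Real.log (Real.Gamma (s + m))) / (t - s) := by
      have hle := Real.convexOn_log_Gamma.le_slope_of_hasDerivAt
        (show (s + (m:ℝ)) ∈ Set.Ioi (0:ℝ) from hsm)
        (show (t + (m:ℝ)) ∈ Set.Ioi (0:ℝ) from htm)
        (by linarith) (logGamma_hasDeriv hsm)
      rw [slope_def_field] at hle
      have : (t + (m:ℝ)) - (s + m) = t - s := by ring
      rw [this] at hle
      exact hle
    have h4 : Real.log (s + n) ≤ psi (s + m) := by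
      have hsn : (0:ℝ) < s + n := by positivity
      have hle := Real.convexOn_log_Gamma.slope_le_of_hasDerivAt
        (show (s + (n:ℝ)) ∈ Set.Ioi (0:ℝ) from hsn)
        (show (s + (m:ℝ)) ∈ Set.Ioi (0:ℝ) from hsm)
        (by rw [hmr]; linarith) (logGamma_hasDeriv hsm)
      rw [slope_def_field] at hle
      simp only [Function.comp_apply] at hle
      have e3 : s + (m:ℝ) = (s + n) + 1 := by rw [hmr]; ring
      have e4 : Real.Gamma (s + m) = (s + n) * Real.Gamma (s + n) := by
        rw [e3, Real.Gamma_add_one hsn.ne']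
      rw [e4, Real.log_mul hsn.ne' (Real.Gamma_pos_of_pos hsn).ne'] at hle
      have e5 : (s + (m:ℝ)) - (s + n) = 1 := by rw [hmr]; ring
      rw [e5] at hle
      simpa using hle
    have h5 : psi (L + m) ≤ Real.log (L + m) := by
      have hle := Real.convexOn_log_Gamma.le_slope_of_hasDerivAt
        (show (L + (m:ℝ)) ∈ Set.Ioi (0:ℝ) from hLm)
        (Set.mem_Ioi.mpr (by linarith : (0:ℝ) < L + (m:ℝ) + 1))
        (by linarith) (logGamma_hasDeriv hLm)
      rw [slope_def_field] at hle
      simp only [Function.comp_apply] at hle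
      have e4 : Real.Gamma (L + m + 1) = (L + m) * Real.Gamma (L + m) :=
        Real.Gamma_add_one hLm.ne'
      rw [e4, Real.log_mul hLm.ne' (Real.Gamma_pos_of_pos hLm).ne'] at hle
      have e5 : (L + (m:ℝ) + 1) - (L + m) = 1 := by ring
      rw [e5] at hle
      simpa using hle
    have hcast : L + ((n:ℝ) + 1) = L + (m:ℝ) := by rw [hmr]
    rw [hcast]
    linarith
  -- limit argument
  have hlim : Filter.Tendsto (fun n : ℕ => Real.log (s + n) - Real.log (L + (n + 1)))
      Filter.atTop (nhds 0) := by
    have hinner : Filter.Tendsto (fun n : ℕ => (s + (n:ℝ)) / (L + (n + 1)))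
        Filter.atTop (nhds 1) := by
      have t1 : Filter.Tendsto (fun n : ℕ => L + 1 + (n:ℝ)) Filter.atTop Filter.atTop :=
        tendsto_atTop_add_const_left _ _ tendsto_natCast_atTop_atTop
      have t2 : Filter.Tendsto (fun n : ℕ => (s - L - 1) / (L + 1 + (n:ℝ)))
          Filter.atTop (nhds 0) := Filter.Tendsto.div_atTop tendsto_const_nhds t1
      have t3 : Filter.Tendsto (fun n : ℕ => 1 + (s - L - 1) / (L + 1 + (n:ℝ)))
          Filter.atTop (nhds 1) := by
        simpa using tendsto_const_nhds.add t2
      refine t3.congr (fun n => ?_)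
      have hpos : (0:ℝ) < L + 1 + n := by positivity
      field_simp
      ring
    have t4 : Filter.Tendsto (fun n : ℕ => Real.log ((s + (n:ℝ)) / (L + (n + 1))))
        Filter.atTop (nhds 0) := by
      have := (Real.continuousAt_log one_ne_zero).tendsto.comp hinner
      simpa [Function.comp_def] using this
    refine t4.congr (fun n => ?_)
    rw [Real.log_div (by positivity) (by positivity)]
  have h0 : (0:ℝ) ≤ D - psi L := le_of_tendsto hlim (Filter.Eventually.of_forall key)
  linarith

theorem stmt_13 (s t : ℝ) (hs : 0 < s) (ht : 0 < t) (hst : s ≠ t) :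
    (Real.log (Real.Gamma t) - Real.log (Real.Gamma s)) / (t - s) ≥
      psi ((t - s) / (Real.log t - Real.log s)) := by
  rcases hst.lt_or_gt with h | h
  · exact core hs h
  · have hcore := core ht h
    have e1 : (s - t) / (Real.log s - Real.log t) = (t - s) / (Real.log t - Real.log s) := by
      rw [← neg_sub t s, ← neg_sub (Real.log t) (Real.log s), neg_div_neg_eq]
    have e2 : (Real.log (Real.Gamma s) - Real.log (Real.Gamma t)) / (s - t)
        = (Real.log (Real.Gamma t) - Real.log (Real.Gamma s)) / (t - s) := by
      rw [← neg_sub (Real.log (Real.Gamma t)), ← neg_sub t s, neg_div_neg_eq]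
    rw [ge_iff_le, ← e1, ← e2]
    exact hcore
end

section
/- For positive integers m > n ≥ 0 and positive numbers s ≠ t, (ψ^(m))^{-1}((1/(t-s))·∫ₛᵗ ψ^(m)(v) dv) ≤ (ψ^(n))^{-1}((1/(t-s))·∫ₛᵗ ψ^(n)(v) dv), where (ψ^(k))^{-1} is the inverse function of the k-th derivative of the digamma function on (0,∞). -/
open Real Filter Set Topology

noncomputable def S (p : ℕ) (x : ℝ) : ℝ := ∑' j : ℕ, ((x + j) ^ p)⁻¹

lemma add_nat_pos {x : ℝ} (hx : 0 < x) (j : ℕ) : 0 < x + j := by positivity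

lemma summable_S {p : ℕ} (hp : 2 ≤ p) {x : ℝ} (hx : 0 < x) :
    Summable (fun j : ℕ => ((x + j) ^ p)⁻¹) := by
  rw [← summable_nat_add_iff 1]
  have h2 : Summable (fun j : ℕ => (((j : ℝ) + 1) ^ 2)⁻¹) := by
    have := (summable_nat_add_iff (f := fun n : ℕ => (1:ℝ) / (n : ℝ) ^ 2) 1).mpr
      (Real.summable_one_div_nat_pow.mpr one_lt_two)
    simpa [one_div] using this
  refine Summable.of_nonneg_of_le (fun j => by positivity) (fun j => ?_) h2
  have h1 : ((j : ℝ) + 1) ≤ x + (j + 1 : ℕ) := by push_cast; linarith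
  have h1' : (0:ℝ) < (j : ℝ) + 1 := by positivity
  have : ((j:ℝ) + 1) ^ 2 ≤ (x + (j+1:ℕ)) ^ p := by
    calc ((j:ℝ) + 1) ^ 2 ≤ ((j:ℝ) + 1) ^ p := by
          apply pow_le_pow_right₀ (by linarith) hp
      _ ≤ (x + (j+1:ℕ)) ^ p := by
          apply pow_le_pow_left₀ (by positivity) h1
  exact inv_anti₀ (by positivity) this

lemma S_pos {p : ℕ} (hp : 2 ≤ p) {x : ℝ} (hx : 0 < x) : 0 < S p x := by
  refine Summable.tsum_pos (summable_S hp hx) (fun j => by positivity) 0 ?_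
  have : (0:ℝ) < x + (0:ℕ) := by simpa using hx
  positivity

lemma hasDerivAt_term (p : ℕ) (hp : 1 ≤ p) (j : ℕ) {y : ℝ} (hy : 0 < y + j) :
    HasDerivAt (fun z : ℝ => ((z + j) ^ p)⁻¹) (-(p : ℝ) * ((y + j) ^ (p+1))⁻¹) y := by
  have h1 : HasDerivAt (fun z : ℝ => (z + j) ^ p) ((p : ℝ) * (y + j) ^ (p - 1)) y := by
    simpa using (((hasDerivAt_id y).add_const (j : ℝ)).fun_pow p)
  have h2 := h1.fun_inv (by positivity)
  refine h2.congr_deriv ?_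
  have hne : (y + j) ≠ 0 := hy.ne'
  have hexp : ((y+j)^p)^2 = (y+j)^(p+1) * ((y+j)^(p-1)) := by
    rw [← pow_add, ← pow_mul]
    congr 1
    omega
  rw [hexp]
  field_simp


lemma hasDerivAt_S {p : ℕ} (hp : 2 ≤ p) {x : ℝ} (hx : 0 < x) :
    HasDerivAt (S p) (-(p:ℝ) * S (p+1) x) x := by
  have hxx : x ∈ Ioi (x/2) := by simp [mem_Ioi]; linarith
  have key : HasDerivAt (fun z : ℝ => ∑' j : ℕ, ((z + j) ^ p)⁻¹)
      (∑' j : ℕ, (-(p:ℝ) * ((x + j) ^ (p+1))⁻¹)) x := by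
    apply hasDerivAt_tsum_of_isPreconnected
      (u := fun j : ℕ => (p:ℝ) * ((x/2 + j) ^ (p+1))⁻¹)
      (((summable_S (by omega) (by linarith : (0:ℝ) < x/2)).mul_left _))
      isOpen_Ioi (isPreconnected_Ioi)
      (fun j y hy => hasDerivAt_term p (by omega) j
        (by simp only [mem_Ioi] at hy
            have := j.cast_nonneg (α := ℝ); linarith))
      ?_ hxx (summable_S hp hx) hxx
    · intro j y hy
      have hy0 : (0:ℝ) < y := by simp only [mem_Ioi] at hy; linarith
      simp only [mem_Ioi] at hy
      have hyj : (0:ℝ) < y + j := by have := j.cast_nonneg (α := ℝ); linarith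
      rw [norm_mul, norm_neg, Real.norm_natCast, norm_inv, Real.norm_eq_abs, abs_pow,
        abs_of_pos hyj]
      have h2 : (0:ℝ) < x/2 + j := by have := j.cast_nonneg (α := ℝ); linarith
      show (p:ℝ) * ((y + j) ^ (p+1))⁻¹ ≤ (p:ℝ) * ((x/2 + j) ^ (p+1))⁻¹
      refine mul_le_mul_of_nonneg_left ?_ p.cast_nonneg
      exact inv_anti₀ (by positivity) (pow_le_pow_left₀ (le_of_lt h2) (by linarith) _)
  have : (∑' j : ℕ, (-(p:ℝ) * ((x + j) ^ (p+1))⁻¹)) = -(p:ℝ) * S (p+1) x := by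
    rw [tsum_mul_left]; rfl
  rw [← this]; exact key

lemma contOn_S {p : ℕ} (hp : 2 ≤ p) : ContinuousOn (S p) (Ioi 0) := fun x hx =>
  ((hasDerivAt_S hp hx).differentiableAt).continuousAt.continuousWithinAt

lemma strictAntiOn_S {p : ℕ} (hp : 2 ≤ p) : StrictAntiOn (S p) (Ioi 0) := by
  apply strictAntiOn_of_deriv_neg (convex_Ioi 0) (contOn_S hp)
  intro x hx
  rw [interior_Ioi] at hx
  rw [(hasDerivAt_S hp hx).deriv]
  exact mul_neg_of_neg_of_pos (by simp; omega) (S_pos (p := p+1) (by omega) hx)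

lemma cs_S {p : ℕ} (hp : 2 ≤ p) {x : ℝ} (hx : 0 < x) :
    (S (p+1) x)^2 ≤ S p x * S (p+2) x := by
  have hxj : ∀ j : ℕ, (0:ℝ) < x + j := fun j => by positivity
  set f : ℕ → ℝ := fun j => Real.sqrt (((x + j) ^ p)⁻¹) with hf
  set g : ℕ → ℝ := fun j => Real.sqrt (((x + j) ^ (p+2))⁻¹) with hg
  have hfg : ∀ j, f j * g j = ((x + j) ^ (p+1))⁻¹ := by
    intro j
    rw [hf, hg, ← Real.sqrt_mul (by positivity), ← mul_inv, ← pow_add]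
    have h2 : p + (p + 2) = (p + 1) * 2 := by ring
    rw [h2, pow_mul, ← inv_pow, Real.sqrt_sq (by positivity)]
  have hbound : ∀ N : ℕ,
      (∑ j ∈ Finset.range N, ((x + j) ^ (p+1))⁻¹)^2 ≤ S p x * S (p+2) x := by
    intro N
    have h1 := Finset.sum_mul_sq_le_sq_mul_sq (Finset.range N) f g
    have hfs : ∀ j, f j ^ 2 = ((x + j) ^ p)⁻¹ := fun j => Real.sq_sqrt (by positivity)
    have hgs : ∀ j, g j ^ 2 = ((x + j) ^ (p+2))⁻¹ := fun j => Real.sq_sqrt (by positivity)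
    simp only [hfg, hfs, hgs] at h1
    refine h1.trans (mul_le_mul ?_ ?_ (by positivity) ?_)
    · exact Summable.sum_le_tsum _ (fun j _ => by positivity) (summable_S hp hx)
    · exact Summable.sum_le_tsum _ (fun j _ => by positivity) (summable_S (by omega) hx)
    · exact tsum_nonneg (fun j => by positivity)
  have htend : Tendsto (fun N => (∑ j ∈ Finset.range N, ((x + j) ^ (p+1))⁻¹)^2)
      atTop (𝓝 ((S (p+1) x)^2)) :=
    ((summable_S (by omega) hx).hasSum.tendsto_sum_nat).pow 2
  exact le_of_tendsto htend (Eventually.of_forall hbound)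

lemma hasDerivAt_ratio {p : ℕ} (hp : 2 ≤ p) {x : ℝ} (hx : 0 < x) :
    HasDerivAt (fun y => S (p+1) y / S p y)
      ((-((p:ℝ)+1) * S (p+2) x * S p x - S (p+1) x * (-(p:ℝ) * S (p+1) x)) / (S p x)^2) x := by
  have h1 := hasDerivAt_S (p := p+1) (by omega) hx
  have h2 := hasDerivAt_S (p := p) hp hx
  have := h1.fun_div h2 (S_pos hp hx).ne'
  refine this.congr_deriv ?_
  push_cast; ring

lemma antitoneOn_ratio {p : ℕ} (hp : 2 ≤ p) :
    AntitoneOn (fun y => S (p+1) y / S p y) (Ioi 0) := by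
  apply antitoneOn_of_deriv_nonpos (convex_Ioi 0)
  · exact fun x hx => ((hasDerivAt_ratio hp hx).differentiableAt).continuousAt.continuousWithinAt
  · intro x hx
    rw [interior_Ioi] at hx
    exact ((hasDerivAt_ratio hp hx).differentiableAt).differentiableWithinAt
  · intro x hx
    rw [interior_Ioi] at hx
    rw [(hasDerivAt_ratio hp hx).deriv]
    have hcs := cs_S hp hx
    have h0 := S_pos hp hx
    have h1 := S_pos (p := p+1) (by omega) hx
    have h2 := S_pos (p := p+2) (by omega) hx
    have hnum : (-((p:ℝ)+1) * S (p+2) x * S p x - S (p+1) x * (-(p:ℝ) * S (p+1) x)) ≤ 0 := by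
      nlinarith [p.cast_nonneg (α := ℝ)]
    exact div_nonpos_of_nonpos_of_nonneg hnum (by positivity)

noncomputable def psiAux (x : ℝ) : ℝ :=
  -eulerMascheroniConstant + (-(x⁻¹) + ∑' j : ℕ, (((j:ℝ)+1)⁻¹ - (x+(j:ℝ)+1)⁻¹))

noncomputable def lgs (n : ℕ) (y : ℝ) : ℝ :=
  y * Real.log n + Real.log (n.factorial) - ∑ j ∈ Finset.range (n+1), Real.log (y + j)

noncomputable def lgs' (n : ℕ) (y : ℝ) : ℝ :=
  (Real.log n - harmonic n) + (-(y⁻¹) + ∑ j ∈ Finset.range n, (((j:ℝ)+1)⁻¹ - (y+(j:ℝ)+1)⁻¹))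

lemma term_eq {j y : ℝ} (hj : 0 < j + 1) (hy : 0 < y) :
    (j+1)⁻¹ - (y+j+1)⁻¹ = y * ((j+1) * (y+j+1))⁻¹ := by
  have h2 : (0:ℝ) < y + j + 1 := by linarith
  rw [inv_sub_inv hj.ne' h2.ne', div_eq_mul_inv]
  congr 1
  ring

lemma term_bound {j y b : ℝ} (hj : 0 ≤ j) (hy : 0 < y) (hb : y ≤ b) :
    |(j+1)⁻¹ - (y+j+1)⁻¹| ≤ b * ((j+1)^2)⁻¹ := by
  have h1 : (0:ℝ) < j + 1 := by linarith
  have h2 : (0:ℝ) < y + j + 1 := by linarith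
  rw [abs_of_nonneg (by
    rw [sub_nonneg]
    exact inv_anti₀ h1 (by linarith))]
  rw [term_eq h1 hy]
  apply mul_le_mul hb _ (by positivity) (by linarith)
  apply inv_anti₀ (by positivity)
  rw [sq]
  apply mul_le_mul_of_nonneg_left (by linarith) h1.le

lemma summable_term {y : ℝ} (hy : 0 < y) :
    Summable (fun j : ℕ => (((j:ℝ)+1)⁻¹ - (y+(j:ℝ)+1)⁻¹)) := by
  have hs : Summable (fun j : ℕ => y * (((j:ℝ)+1)^2)⁻¹) := by
    apply Summable.mul_left
    have := (summable_nat_add_iff (f := fun n : ℕ => (1:ℝ) / (n : ℝ) ^ 2) 1).mpr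
      (Real.summable_one_div_nat_pow.mpr one_lt_two)
    simpa [one_div] using this
  refine Summable.of_norm_bounded hs (fun j => ?_)
  exact term_bound j.cast_nonneg hy le_rfl

lemma hasDerivAt_lgs {n : ℕ} (hn : 1 ≤ n) {y : ℝ} (hy : 0 < y) :
    HasDerivAt (lgs n) (lgs' n y) y := by
  have h1 : HasDerivAt (fun z : ℝ => z * Real.log n + Real.log (n.factorial))
      (Real.log n) y := by
    simpa using ((hasDerivAt_id y).mul_const (Real.log n)).add_const (Real.log (n.factorial))
  have h2 : HasDerivAt (fun z : ℝ => ∑ j ∈ Finset.range (n+1), Real.log (z + j))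
      (∑ j ∈ Finset.range (n+1), (y + (j:ℝ))⁻¹) y := by
    apply HasDerivAt.fun_sum
    intro j _
    have hyj : 0 < y + (j:ℝ) := by have := j.cast_nonneg (α := ℝ); linarith
    exact ((Real.hasDerivAt_log hyj.ne').comp y ((hasDerivAt_id y).add_const (j:ℝ))).congr_deriv (by simp : _ = (y + (j:ℝ))⁻¹)
  have h3 := h1.fun_sub h2
  refine h3.congr_deriv ?_
  unfold lgs'
  have hharm : (harmonic n : ℝ) = ∑ j ∈ Finset.range n, ((j:ℝ)+1)⁻¹ := by
    unfold harmonic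
    push_cast
    rfl
  rw [hharm, Finset.sum_sub_distrib, Finset.sum_range_succ']
  push_cast
  have e2 : ∑ x ∈ Finset.range n, (y + ((x:ℝ) + 1))⁻¹
      = ∑ x ∈ Finset.range n, (y + (x:ℝ) + 1)⁻¹ := by
    apply Finset.sum_congr rfl
    intros
    ring_nf
  rw [e2]
  ring

lemma lgs_eq_log_GammaSeq {n : ℕ} (hn : 1 ≤ n) {y : ℝ} (hy : 0 < y) :
    lgs n y = Real.log (Real.GammaSeq y n) := by
  have hn0 : (0:ℝ) < n := by exact_mod_cast hn
  have hprod : ∀ j ∈ Finset.range (n+1), y + (j:ℝ) ≠ 0 := by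
    intro j _
    have := j.cast_nonneg (α := ℝ)
    positivity
  have hprodpos : (0:ℝ) < ∏ j ∈ Finset.range (n+1), (y + j) := by
    apply Finset.prod_pos
    intro j _
    have := j.cast_nonneg (α := ℝ)
    positivity
  unfold Real.GammaSeq lgs
  rw [Real.log_div (by positivity) hprodpos.ne', Real.log_mul (by positivity) (by positivity),
    Real.log_rpow hn0, Real.log_prod hprod]

lemma tendsto_lgs {y : ℝ} (hy : 0 < y) :
    Tendsto (fun n => lgs n y) atTop (𝓝 (Real.log (Real.Gamma y))) := by
  have h1 : Tendsto (fun n => Real.log (Real.GammaSeq y n)) atTop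
      (𝓝 (Real.log (Real.Gamma y))) :=
    ((Real.continuousAt_log (Real.Gamma_pos_of_pos hy).ne').tendsto).comp
      (Real.GammaSeq_tendsto_Gamma y)
  apply h1.congr'
  filter_upwards [eventually_ge_atTop 1] with n hn
  exact (lgs_eq_log_GammaSeq hn hy).symm

lemma tendstoUniformlyOn_lgs' {a b : ℝ} (ha : 0 < a) :
    TendstoUniformlyOn lgs' psiAux atTop (Ioo a b) := by
  have hA : TendstoUniformlyOn (fun (n : ℕ) (_ : ℝ) => (Real.log n - (harmonic n : ℝ)))
      (fun _ => -eulerMascheroniConstant) atTop (Ioo a b) := by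
    apply Filter.Tendsto.tendstoUniformlyOn_const
    have := Real.tendsto_harmonic_sub_log.neg
    simpa [neg_sub] using this
  have hB1 : TendstoUniformlyOn (fun (_ : ℕ) (y : ℝ) => -(y⁻¹)) (fun y => -(y⁻¹))
      atTop (Ioo a b) := by
    rw [Metric.tendstoUniformlyOn_iff]
    intro ε hε
    filter_upwards with n y _
    simpa using hε
  have hB2 : TendstoUniformlyOn
      (fun (n : ℕ) (y : ℝ) => ∑ j ∈ Finset.range n, (((j:ℝ)+1)⁻¹ - (y+(j:ℝ)+1)⁻¹))
      (fun y => ∑' j : ℕ, (((j:ℝ)+1)⁻¹ - (y+(j:ℝ)+1)⁻¹)) atTop (Ioo a b) := by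
    apply tendstoUniformlyOn_tsum_nat
      (u := fun j : ℕ => b * (((j:ℝ)+1)^2)⁻¹)
    · apply Summable.mul_left
      have := (summable_nat_add_iff (f := fun n : ℕ => (1:ℝ) / (n : ℝ) ^ 2) 1).mpr
        (Real.summable_one_div_nat_pow.mpr one_lt_two)
      simpa [one_div] using this
    · intro j y hy
      exact term_bound j.cast_nonneg (lt_trans ha hy.1) hy.2.le
  have := hA.add (hB1.add hB2)
  exact this

lemma hasDerivAt_logGamma {x : ℝ} (hx : 0 < x) :
    HasDerivAt (fun y => Real.log (Real.Gamma y)) (psiAux x) x := by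
  apply hasDerivAt_of_tendstoUniformlyOn (f := lgs) (f' := lgs')
    (s := Ioo (x/2) (x+1)) isOpen_Ioo (tendstoUniformlyOn_lgs' (by linarith))
  · filter_upwards [eventually_ge_atTop 1] with n hn y hy
    exact hasDerivAt_lgs hn (by cases hy; linarith)
  · intro y hy
    exact tendsto_lgs (by cases hy; linarith)
  · constructor <;> linarith

lemma hasDerivAt_psiAux {x : ℝ} (hx : 0 < x) :
    HasDerivAt psiAux (S 2 x) x := by
  have hinv : HasDerivAt (fun y : ℝ => -(y⁻¹)) ((x^2)⁻¹) x := by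
    simpa using (hasDerivAt_inv hx.ne').fun_neg
  have hterm : ∀ (j : ℕ) (y : ℝ), y ∈ Ioi (x/2) →
      HasDerivAt (fun z : ℝ => (((j:ℝ)+1)⁻¹ - (z+(j:ℝ)+1)⁻¹)) ((y+(j:ℝ)+1)^2)⁻¹ y := by
    intro j y hy
    simp only [mem_Ioi] at hy
    have hyj : (0:ℝ) < y + j + 1 := by have := j.cast_nonneg (α := ℝ); linarith
    have h1 : HasDerivAt (fun z : ℝ => z + (j:ℝ) + 1) 1 y := by
      simpa [← add_assoc] using ((hasDerivAt_id y).add_const ((j:ℝ)+1))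
    have h2 := (hasDerivAt_inv hyj.ne').comp y h1
    have h3 := (hasDerivAt_const y (((j:ℝ)+1)⁻¹)).fun_sub h2
    simpa using h3
  have htsum : HasDerivAt (fun z : ℝ => ∑' j : ℕ, (((j:ℝ)+1)⁻¹ - (z+(j:ℝ)+1)⁻¹))
      (∑' j : ℕ, ((x+(j:ℝ)+1)^2)⁻¹) x := by
    apply hasDerivAt_tsum_of_isPreconnected
      (u := fun j : ℕ => ((x/2+(j:ℝ)+1)^2)⁻¹)
      ?_ isOpen_Ioi isPreconnected_Ioi hterm ?_
      (show x ∈ Ioi (x/2) by simp [mem_Ioi]; linarith)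
      (summable_term hx)
      (show x ∈ Ioi (x/2) by simp [mem_Ioi]; linarith)
    · apply Summable.congr (summable_S (p := 2) le_rfl (show (0:ℝ) < x/2 + 1 by linarith))
      intro b
      ring_nf
    · intro j y hy
      simp only [mem_Ioi] at hy
      have hyj : (0:ℝ) < y + j + 1 := by have := j.cast_nonneg (α := ℝ); linarith
      rw [Real.norm_eq_abs, abs_of_pos (by positivity)]
      apply inv_anti₀ (by positivity)
      have := j.cast_nonneg (α := ℝ)
      apply pow_le_pow_left₀ (by linarith) (by linarith)
  have hsum := hinv.fun_add htsum
  have hEq : (x^2)⁻¹ + (∑' j : ℕ, ((x+(j:ℝ)+1)^2)⁻¹) = S 2 x := by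
    rw [S, Summable.tsum_eq_zero_add (summable_S le_rfl hx)]
    push_cast
    norm_num
    exact tsum_congr (fun b => by ring_nf)
  have := (hasDerivAt_const x (-eulerMascheroniConstant)).fun_add hsum
  rw [hEq] at this
  exact this.congr_deriv (zero_add _)

noncomputable def polygamma (k : ℕ) : ℝ → ℝ := iteratedDeriv k psi

lemma psi_eq_psiAux {x : ℝ} (hx : 0 < x) : psi x = psiAux x :=
  (hasDerivAt_logGamma hx).deriv

lemma psi_eventuallyEq {x : ℝ} (hx : 0 < x) : psi =ᶠ[𝓝 x] psiAux :=
  Filter.eventuallyEq_of_mem (isOpen_Ioi.mem_nhds hx) (fun y hy => psi_eq_psiAux hy)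

lemma hasDerivAt_psi {x : ℝ} (hx : 0 < x) : HasDerivAt psi (S 2 x) x :=
  (hasDerivAt_psiAux hx).congr_of_eventuallyEq (psi_eventuallyEq hx)

lemma polygamma_deriv_aux : ∀ k : ℕ, ∀ {x : ℝ}, 0 < x →
    HasDerivAt (polygamma k) ((-1:ℝ)^(k+2) * ((k+1).factorial : ℝ) * S (k+2) x) x := by
  intro k
  induction k with
  | zero =>
    intro x hx
    have h := hasDerivAt_psi hx
    have : polygamma 0 = psi := by rw [polygamma, iteratedDeriv_zero]
    rw [this]
    convert h using 1
    norm_num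
  | succ k ih =>
    intro x hx
    have heq : Set.EqOn (polygamma (k+1))
        (fun y => (-1:ℝ)^(k+2) * ((k+1).factorial : ℝ) * S (k+2) y) (Ioi 0) := by
      intro y hy
      show polygamma (k+1) y = _
      rw [polygamma, iteratedDeriv_succ, ← polygamma]
      exact (ih hy).deriv
    have hrhs : HasDerivAt (fun y => (-1:ℝ)^(k+2) * ((k+1).factorial : ℝ) * S (k+2) y)
        ((-1:ℝ)^(k+3) * ((k+2).factorial : ℝ) * S (k+3) x) x := by
      have := (hasDerivAt_S (p := k+2) (by omega) hx).const_mul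
        ((-1:ℝ)^(k+2) * ((k+1).factorial : ℝ))
      refine this.congr_deriv ?_
      symm
      rw [pow_succ, Nat.factorial_succ]
      push_cast
      ring
    have : polygamma (k+1) =ᶠ[𝓝 x]
        (fun y => (-1:ℝ)^(k+2) * ((k+1).factorial : ℝ) * S (k+2) y) :=
      Filter.eventuallyEq_of_mem (isOpen_Ioi.mem_nhds hx) heq
    exact hrhs.congr_of_eventuallyEq this

lemma polygamma_succ_eq {k : ℕ} {x : ℝ} (hx : 0 < x) :
    polygamma (k+1) x = (-1:ℝ)^(k+2) * ((k+1).factorial : ℝ) * S (k+2) x := by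
  rw [polygamma, iteratedDeriv_succ, ← polygamma]
  exact (polygamma_deriv_aux k hx).deriv

lemma hasDerivAt_polygamma (k : ℕ) {x : ℝ} (hx : 0 < x) :
    HasDerivAt (polygamma k) (polygamma (k+1) x) x := by
  rw [polygamma_succ_eq hx]
  exact polygamma_deriv_aux k hx

noncomputable def G (k : ℕ) (x : ℝ) : ℝ := (-1:ℝ)^k * polygamma k x

lemma hasDerivAt_G (k : ℕ) {x : ℝ} (hx : 0 < x) :
    HasDerivAt (G k) (((k+1).factorial : ℝ) * S (k+2) x) x := by
  have h := (hasDerivAt_polygamma k hx).const_mul ((-1:ℝ)^k)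
  have hval : (-1:ℝ)^k * polygamma (k+1) x = ((k+1).factorial : ℝ) * S (k+2) x := by
    rw [polygamma_succ_eq hx, ← mul_assoc, ← mul_assoc, ← pow_add]
    have : (-1:ℝ)^(k + (k+2)) = 1 := by
      rw [neg_one_pow_eq_one_iff_even (by norm_num : (-1:ℝ) ≠ 1)]
      exact ⟨k+1, by ring⟩
    rw [this, one_mul]
  rw [← hval]
  exact h

lemma G_deriv_pos (k : ℕ) {x : ℝ} (hx : 0 < x) :
    0 < ((k+1).factorial : ℝ) * S (k+2) x := by
  have := S_pos (p := k+2) (by omega) hx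
  have h2 : (0:ℝ) < ((k+1).factorial : ℝ) := by exact_mod_cast (k+1).factorial_pos
  positivity

lemma contOn_G (k : ℕ) : ContinuousOn (G k) (Ioi 0) := fun x hx =>
  ((hasDerivAt_G k hx).differentiableAt).continuousAt.continuousWithinAt

lemma strictMonoOn_G (k : ℕ) : StrictMonoOn (G k) (Ioi 0) := by
  apply strictMonoOn_of_deriv_pos (convex_Ioi 0) (contOn_G k)
  intro x hx
  rw [interior_Ioi] at hx
  rw [(hasDerivAt_G k hx).deriv]
  exact G_deriv_pos k hx

lemma exists_mean_point (k : ℕ) {s t : ℝ} (hs : 0 < s) (hst : s < t) :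
    ∃ c ∈ Icc s t, (t - s) * G k c = ∫ w in s..t, G k w := by
  have hIcc : Icc s t ⊆ Ioi 0 := fun y hy => lt_of_lt_of_le hs hy.1
  have hcont : ContinuousOn (G k) (Icc s t) := (contOn_G k).mono hIcc
  have hint : IntervalIntegrable (G k) MeasureTheory.volume s t :=
    hcont.intervalIntegrable_of_Icc hst.le
  have hmono := (strictMonoOn_G k).monotoneOn
  have hlow : (t - s) * G k s ≤ ∫ w in s..t, G k w := by
    have := intervalIntegral.integral_mono_on hst.le intervalIntegrable_const hint
      (fun x hx => hmono (hIcc ⟨le_refl s, hst.le⟩) (hIcc hx) hx.1)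
    simpa [smul_eq_mul, mul_comm] using this
  have hhigh : (∫ w in s..t, G k w) ≤ (t - s) * G k t := by
    have := intervalIntegral.integral_mono_on hst.le hint intervalIntegrable_const
      (fun x hx => hmono (hIcc hx) (hIcc ⟨hst.le, le_refl t⟩) hx.2)
    simpa [smul_eq_mul, mul_comm] using this
  have hts : 0 < t - s := by linarith
  have hA1 : G k s ≤ (∫ w in s..t, G k w) / (t - s) := by
    rw [le_div_iff₀ hts]; linarith
  have hA2 : (∫ w in s..t, G k w) / (t - s) ≤ G k t := by
    rw [div_le_iff₀ hts]; linarith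
  obtain ⟨c, hc, hGc⟩ := intermediate_value_Icc hst.le hcont ⟨hA1, hA2⟩
  exact ⟨c, hc, by rw [hGc]; field_simp⟩

lemma step_le (k : ℕ) {s t : ℝ} (hs : 0 < s) (hst : s < t) {c c' : ℝ}
    (hc : c ∈ Icc s t) (hc' : c' ∈ Icc s t)
    (h1 : (t - s) * G k c = ∫ w in s..t, G k w)
    (h2 : (t - s) * G (k+1) c' = ∫ w in s..t, G (k+1) w) : c' ≤ c := by
  have hIcc : Icc s t ⊆ Ioi 0 := fun y hy => lt_of_lt_of_le hs hy.1
  have hc0 : (0:ℝ) < c := lt_of_lt_of_le hs hc.1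
  have hts : (0:ℝ) < t - s := by linarith
  set ρ : ℝ → ℝ := fun y => S (k+3) y / S (k+2) y with hρ
  set r : ℝ := ((k:ℝ) + 2) * ρ c with hrdef
  set H : ℝ → ℝ := fun x => G (k+1) x - r * G k x with hH
  have hDeriv : ∀ {x : ℝ}, 0 < x → HasDerivAt H
      (((k+2).factorial : ℝ) * S (k+3) x - r * (((k+1).factorial : ℝ) * S (k+2) x)) x :=
    fun {x} hx => (hasDerivAt_G (k+1) hx).sub ((hasDerivAt_G k hx).const_mul r)
  have hDval : ∀ {x : ℝ}, 0 < x →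
      (((k+2).factorial : ℝ) * S (k+3) x - r * (((k+1).factorial : ℝ) * S (k+2) x))
        = ((k:ℝ)+2) * ((k+1).factorial : ℝ) * S (k+2) x * (ρ x - ρ c) := by
    intro x hx
    have hS2 : (0:ℝ) < S (k+2) x := S_pos (by omega) hx
    have hfac : ((k+2).factorial : ℝ) = ((k:ℝ)+2) * ((k+1).factorial : ℝ) := by
      rw [Nat.factorial_succ]; push_cast; ring
    have hρx : S (k+3) x = ρ x * S (k+2) x := by
      rw [hρ]; field_simp
    rw [hfac, hrdef, hρx]
    ring
  have hcont : ContinuousOn H (Icc s t) := fun x hx =>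
    ((hDeriv (hIcc hx)).differentiableAt).continuousAt.continuousWithinAt
  have hHle : ∀ w ∈ Icc s t, H w ≤ H c := by
    have hmonoH : MonotoneOn H (Icc s c) := by
      apply monotoneOn_of_deriv_nonneg (convex_Icc s c)
        (hcont.mono (Icc_subset_Icc le_rfl hc.2))
      · intro x hx
        rw [interior_Icc] at hx
        exact ((hDeriv (by cases hx; linarith)).differentiableAt).differentiableWithinAt
      · intro x hx
        rw [interior_Icc] at hx
        obtain ⟨hx1, hx2⟩ := hx
        have hx0 : (0:ℝ) < x := by linarith
        rw [(hDeriv hx0).deriv, hDval hx0]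
        have hρmono : ρ c ≤ ρ x :=
          antitoneOn_ratio (p := k+2) (by omega) (mem_Ioi.mpr hx0) (mem_Ioi.mpr hc0) hx2.le
        have hS2 : (0:ℝ) < S (k+2) x := S_pos (by omega) hx0
        have hfacpos : (0:ℝ) < ((k+1).factorial : ℝ) := by
          exact_mod_cast (k+1).factorial_pos
        have : (0:ℝ) ≤ ρ x - ρ c := by linarith
        positivity
    have hantiH : AntitoneOn H (Icc c t) := by
      apply antitoneOn_of_deriv_nonpos (convex_Icc c t)
        (hcont.mono (Icc_subset_Icc hc.1 le_rfl))
      · intro x hx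
        rw [interior_Icc] at hx
        exact ((hDeriv (by cases hx; linarith)).differentiableAt).differentiableWithinAt
      · intro x hx
        rw [interior_Icc] at hx
        obtain ⟨hx1, hx2⟩ := hx
        have hx0 : (0:ℝ) < x := by linarith
        rw [(hDeriv hx0).deriv, hDval hx0]
        have hρmono : ρ x ≤ ρ c :=
          antitoneOn_ratio (p := k+2) (by omega) (mem_Ioi.mpr hc0) (mem_Ioi.mpr hx0) hx1.le
        have hS2 : (0:ℝ) < S (k+2) x := S_pos (by omega) hx0
        have hfacpos : (0:ℝ) < ((k+1).factorial : ℝ) := by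
          exact_mod_cast (k+1).factorial_pos
        have hkpos : (0:ℝ) < (k:ℝ) + 2 := by positivity
        nlinarith [mul_pos (mul_pos hkpos hfacpos) hS2]
    intro w hw
    rcases le_total w c with h | h
    · exact hmonoH ⟨hw.1, h⟩ ⟨hc.1, le_rfl⟩ h
    · exact hantiH ⟨le_rfl, hc.2⟩ ⟨h, hw.2⟩ h
  have hintH : IntervalIntegrable H MeasureTheory.volume s t :=
    hcont.intervalIntegrable_of_Icc hst.le
  have hintLe : (∫ w in s..t, H w) ≤ (t - s) * H c := by
    have h := intervalIntegral.integral_mono_on hst.le hintH intervalIntegrable_const hHle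
    rwa [intervalIntegral.integral_const, smul_eq_mul] at h
  have hintG : IntervalIntegrable (G k) MeasureTheory.volume s t :=
    ((contOn_G k).mono hIcc).intervalIntegrable_of_Icc hst.le
  have hintG1 : IntervalIntegrable (G (k+1)) MeasureTheory.volume s t :=
    ((contOn_G (k+1)).mono hIcc).intervalIntegrable_of_Icc hst.le
  have hsplit : (∫ w in s..t, H w)
      = (∫ w in s..t, G (k+1) w) - r * ∫ w in s..t, G k w := by
    rw [hH]
    rw [intervalIntegral.integral_sub hintG1 (hintG.const_mul r),
      intervalIntegral.integral_const_mul]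
  rw [hsplit, ← h1, ← h2] at hintLe
  have hfinal : G (k+1) c' ≤ G (k+1) c := by
    have : (t - s) * G (k+1) c' ≤ (t - s) * G (k+1) c := by
      have hexp : (t - s) * H c = (t - s) * G (k+1) c - r * ((t - s) * G k c) := by
        rw [hH]; ring
      rw [hexp] at hintLe
      linarith
    exact le_of_mul_le_mul_left (by linarith [this]) hts
  have hc'0 : c' ∈ Ioi (0:ℝ) := hIcc hc'
  have hcIoi : c ∈ Ioi (0:ℝ) := hIcc hc
  exact ((strictMonoOn_G (k+1)).le_iff_le hc'0 hcIoi).mp hfinal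

lemma chain_le {s t : ℝ} (hs : 0 < s) (hst : s < t) :
    ∀ (j k : ℕ) {c c' : ℝ}, c ∈ Icc s t → c' ∈ Icc s t →
    ((t - s) * G k c = ∫ w in s..t, G k w) →
    ((t - s) * G (k+j) c' = ∫ w in s..t, G (k+j) w) → c' ≤ c := by
  intro j
  induction j with
  | zero =>
    intro k c c' hc hc' h1 h2
    have hts : (0:ℝ) < t - s := by linarith
    have heq : G k c' = G k c := by
      apply mul_left_cancel₀ hts.ne'
      rw [h1]
      simpa using h2
    have hIcc : Icc s t ⊆ Ioi (0:ℝ) := fun y hy => lt_of_lt_of_le hs hy.1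
    exact le_of_eq ((strictMonoOn_G k).injOn (hIcc hc') (hIcc hc) heq)
  | succ j ih =>
    intro k c c' hc hc' h1 h2
    obtain ⟨d, hd, hdeq⟩ := exists_mean_point (k+j) hs hst
    have h2' : (t - s) * G ((k+j)+1) c' = ∫ w in s..t, G ((k+j)+1) w := by
      have : k + (j+1) = (k+j)+1 := by omega
      rw [← this]; exact h2
    have hstep : c' ≤ d := step_le (k+j) hs hst hd hc' hdeq h2'
    exact hstep.trans (ih k hc hd h1 hdeq)

lemma main_aux (m n : ℕ) (hmn : n ≤ m) (s t : ℝ) (hs : 0 < s) (hst : s < t)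
    (u v : ℝ) (hu : 0 < u) (hv : 0 < v)
    (hum : polygamma m u = (1 / (t - s)) * ∫ w in s..t, polygamma m w)
    (hvn : polygamma n v = (1 / (t - s)) * ∫ w in s..t, polygamma n w) :
    u ≤ v := by
  have hts : (0:ℝ) < t - s := by linarith
  have hIcc : Icc s t ⊆ Ioi (0:ℝ) := fun y hy => lt_of_lt_of_le hs hy.1
  have hG : ∀ (k : ℕ) (w : ℝ), 0 < w →
      polygamma k w = (1 / (t - s)) * ∫ x in s..t, polygamma k x →
      (t - s) * G k w = ∫ x in s..t, G k x := by
    intro k w hw heq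
    have hint : (∫ x in s..t, G k x) = (-1:ℝ)^k * ∫ x in s..t, polygamma k x := by
      rw [← intervalIntegral.integral_const_mul]
      rfl
    rw [hint, G, heq]
    field_simp
  have hGm := hG m u hu hum
  have hGn := hG n v hv hvn
  obtain ⟨cm, hcm, hcmeq⟩ := exists_mean_point m hs hst
  obtain ⟨cn, hcn, hcneq⟩ := exists_mean_point n hs hst
  have hueq : u = cm := by
    apply (strictMonoOn_G m).injOn (mem_Ioi.mpr hu) (hIcc hcm)
    apply mul_left_cancel₀ hts.ne'
    rw [hGm, hcmeq]
  have hveq : v = cn := by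
    apply (strictMonoOn_G n).injOn (mem_Ioi.mpr hv) (hIcc hcn)
    apply mul_left_cancel₀ hts.ne'
    rw [hGn, hcneq]
  obtain ⟨j, rfl⟩ := Nat.exists_eq_add_of_le hmn
  rw [hueq, hveq]
  exact chain_le hs hst j n hcn hcm hcneq hcmeq

theorem stmt_14 (m n : ℕ) (hmn : n < m) (s t : ℝ) (hs : 0 < s) (ht : 0 < t) (hst : s ≠ t)
    (u v : ℝ) (hu : 0 < u) (hv : 0 < v)
    (hum : polygamma m u = (1 / (t - s)) * ∫ w in s..t, polygamma m w)
    (hvn : polygamma n v = (1 / (t - s)) * ∫ w in s..t, polygamma n w) :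
    u ≤ v := by
  rcases hst.lt_or_gt with h | h
  · exact main_aux m n hmn.le s t hs h u v hu hv hum hvn
  · have e : ∀ f : ℝ → ℝ, (1 / (t - s)) * ∫ w in s..t, f w
        = (1 / (s - t)) * ∫ w in t..s, f w := by
      intro f
      rw [intervalIntegral.integral_symm t s]
      have h1 : t - s ≠ 0 := by intro hc; apply hst; linarith
      have h2 : s - t ≠ 0 := by intro hc; apply hst; linarith
      field_simp
      ring
    rw [e] at hum hvn
    exact main_aux m n hmn.le t s ht h u v hu hv hum hvn
end

section
/- For positive numbers a ≠ b, the inequality (Γ(a)/Γ(b))^(1/(a-b)) ≤ exp(ψ(I(a,b))) holds, where I(a,b) = e^(-1)·(b^b/a^a)^(1/(b-a)) is the identric mean. -/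
open Filter Topology Finset Set

namespace Stmt16

noncomputable def T2 (x : ℝ) : ℝ := ∑' n : ℕ, ((x + n) ^ 2)⁻¹
noncomputable def T3 (x : ℝ) : ℝ := ∑' n : ℕ, ((x + n) ^ 3)⁻¹

lemma sumBase : Summable (fun n : ℕ => (((n : ℝ) + 1) ^ 2)⁻¹) := by
  have h : Summable (fun n : ℕ => ((n : ℝ) ^ 2)⁻¹) := by
    simpa [one_div] using Real.summable_one_div_nat_pow.mpr (by norm_num : 1 < 2)
  have := (summable_nat_add_iff 1).mpr h
  simpa using this

lemma min_mul_le (x : ℝ) (hx : 0 < x) (n : ℕ) : min x 1 * ((n : ℝ) + 1) ≤ x + n := by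
  rcases le_total x 1 with h | h
  · rw [min_eq_left h]
    nlinarith [Nat.cast_nonneg (α := ℝ) n]
  · rw [min_eq_right h]
    nlinarith [Nat.cast_nonneg (α := ℝ) n]

lemma summable_aux (x : ℝ) (hx : 0 < x) (p : ℕ) (hp : 2 ≤ p) :
    Summable (fun n : ℕ => ((x + n) ^ p)⁻¹) := by
  have hm : 0 < min x 1 := lt_min hx one_pos
  refine Summable.of_nonneg_of_le (fun n => by positivity)
    (fun n => ?_) (sumBase.mul_left ((min x 1 ^ p)⁻¹))
  have h1 : (0:ℝ) < (n : ℝ) + 1 := by positivity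
  have h2 : min x 1 * ((n : ℝ) + 1) ≤ x + n := min_mul_le x hx n
  have h3 : ((n : ℝ) + 1) ^ 2 ≤ ((n : ℝ) + 1) ^ p := by
    exact pow_le_pow_right₀ (by linarith) hp
  have h4 : (min x 1) ^ p * ((n : ℝ) + 1) ^ 2 ≤ (x + n) ^ p := by
    calc (min x 1) ^ p * ((n : ℝ) + 1) ^ 2 ≤ (min x 1) ^ p * ((n : ℝ) + 1) ^ p := by
          exact mul_le_mul_of_nonneg_left h3 (by positivity)
      _ = (min x 1 * ((n : ℝ) + 1)) ^ p := (mul_pow _ _ _).symm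
      _ ≤ (x + n) ^ p := pow_le_pow_left₀ (by positivity) h2 p
  rw [mul_comm ((min x 1 ^ p)⁻¹) _, ← mul_inv]
  exact inv_anti₀ (by positivity) (by nlinarith)

end Stmt16

namespace Stmt16

lemma tendsto_aux (x : ℝ) (hx : 0 < x) (p : ℕ) (hp : p ≠ 0) :
    Tendsto (fun n : ℕ => ((x + n) ^ p)⁻¹) atTop (𝓝 0) := by
  have h1 : Tendsto (fun n : ℕ => x + (n : ℝ)) atTop atTop :=
    tendsto_atTop_add_const_left _ x tendsto_natCast_atTop_atTop
  exact tendsto_inv_atTop_zero.comp ((tendsto_pow_atTop hp).comp h1)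

lemma hasSum_telescope {f : ℕ → ℝ} (hf : Tendsto f atTop (𝓝 0))
    (hpos : ∀ n, f (n + 1) ≤ f n) : HasSum (fun n => f n - f (n + 1)) (f 0) := by
  rw [hasSum_iff_tendsto_nat_of_nonneg (fun i => sub_nonneg.2 (hpos i))]
  have h : ∀ N, ∑ i ∈ range N, (f i - f (i + 1)) = f 0 - f N := fun N => Finset.sum_range_sub' f N
  simp only [h]
  simpa using tendsto_const_nhds.sub hf

lemma pow_antitone_aux (x : ℝ) (hx : 0 < x) (p : ℕ) (n : ℕ) :
    ((x + (n + 1 : ℕ)) ^ p)⁻¹ ≤ ((x + n) ^ p)⁻¹ := by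
  have h1 : (0:ℝ) < x + n := by positivity
  push_cast
  gcongr
  linarith

lemma hasSum_tel_pow (x : ℝ) (hx : 0 < x) (p : ℕ) (hp : p ≠ 0) :
    HasSum (fun n : ℕ => ((x + n) ^ p)⁻¹ - ((x + n + 1) ^ p)⁻¹) ((x ^ p)⁻¹) := by
  have := hasSum_telescope (f := fun n : ℕ => ((x + n) ^ p)⁻¹) (tendsto_aux x hx p hp)
    (fun n => pow_antitone_aux x hx p n)
  simp only [Nat.cast_add, Nat.cast_one] at this ⊢
  convert this using 2 with n
  · ring_nf
  · norm_num

lemma T2_le (x : ℝ) (hx : 0 < x) : T2 x ≤ (x ^ 2)⁻¹ + x⁻¹ := by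
  have hs2 := summable_aux x hx 2 le_rfl
  have htel := hasSum_tel_pow x hx 1 one_ne_zero
  simp only [pow_one] at htel
  have hshift : T2 x = ((x + (0:ℕ)) ^ 2)⁻¹ + ∑' n : ℕ, ((x + (n + 1 : ℕ)) ^ 2)⁻¹ := by
    exact Summable.tsum_eq_zero_add hs2
  rw [hshift]
  push_cast
  gcongr
  · norm_num
  · calc ∑' n : ℕ, ((x + (n + 1)) ^ 2)⁻¹
        ≤ ∑' n : ℕ, ((x + n)⁻¹ - (x + n + 1)⁻¹) := by
          refine Summable.tsum_le_tsum (fun n => ?_) ?_ htel.summable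
          · have h1 : (0:ℝ) < x + n := by positivity
            have h2 : (x + n)⁻¹ - (x + n + 1)⁻¹ = ((x + n) * (x + n + 1))⁻¹ := by
              field_simp
              ring
            rw [h2]
            refine inv_anti₀ (by positivity) (by nlinarith)
          · have := (summable_nat_add_iff 1).mpr hs2
            refine this.congr (fun n => ?_)
            push_cast; ring_nf
      _ = x⁻¹ := htel.tsum_eq

lemma T3_ge (x : ℝ) (hx : 0 < x) : (1/2) * ((x ^ 2)⁻¹ + (x ^ 3)⁻¹) ≤ T3 x := by
  have hs3 := summable_aux x hx 3 (by norm_num)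
  have h2 := hasSum_tel_pow x hx 2 two_ne_zero
  have h3 := hasSum_tel_pow x hx 3 three_ne_zero
  have hsum : HasSum (fun n : ℕ => (1/2) * ((((x + n) ^ 2)⁻¹ - ((x + n + 1) ^ 2)⁻¹)
      + (((x + n) ^ 3)⁻¹ - ((x + n + 1) ^ 3)⁻¹))) ((1/2) * ((x ^ 2)⁻¹ + (x ^ 3)⁻¹)) :=
    (h2.add h3).mul_left _
  rw [← hsum.tsum_eq]
  refine Summable.tsum_le_tsum (fun n => ?_) hsum.summable hs3
  set u : ℝ := x + n with hu
  have hu0 : 0 < u := by positivity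
  have hu1 : 0 < u + 1 := by linarith
  rw [div_mul_eq_mul_div, div_le_iff₀ (by norm_num : (0:ℝ) < 2)]
  have e1 : (u ^ 2)⁻¹ - ((u + 1) ^ 2)⁻¹ = (2*u+1) / (u^2 * (u+1)^2) := by
    field_simp; ring
  have e2 : (u ^ 3)⁻¹ + ((u + 1) ^ 3)⁻¹ ≥ (u ^ 2)⁻¹ - ((u + 1) ^ 2)⁻¹ := by
    rw [e1, ge_iff_le, div_le_iff₀ (by positivity)]
    have : (u^3)⁻¹ = u⁻¹ * (u^2)⁻¹ := by rw [← mul_inv]; ring_nf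
    field_simp
    nlinarith [sq_nonneg u, sq_nonneg (u+1), pow_pos hu0 3, pow_pos hu1 3]
  nlinarith [pow_pos hu0 3, pow_pos hu1 3]

lemma key (x : ℝ) (hx : 0 < x) : T2 x ≤ 2 * x * T3 x := by
  have h1 := T2_le x hx
  have h2 := T3_ge x hx
  have h3 : 2 * x * ((1/2) * ((x ^ 2)⁻¹ + (x ^ 3)⁻¹)) = (x^2)⁻¹ + x⁻¹ := by
    field_simp; ring
  nlinarith



noncomputable def Fs (N : ℕ) (t : ℝ) : ℝ :=
  t * Real.log N + (∑ j ∈ range N, Real.log ((j:ℝ) + 1)) - ∑ j ∈ range (N + 1), Real.log (t + j)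

noncomputable def F1 (N : ℕ) (t : ℝ) : ℝ :=
  (Real.log N - ∑ j ∈ range N, ((j:ℝ) + 1)⁻¹) - t⁻¹
    + ∑ j ∈ range N, (((j:ℝ) + 1)⁻¹ - (t + j + 1)⁻¹)

noncomputable def F2 (N : ℕ) (t : ℝ) : ℝ := ∑ j ∈ range (N + 1), ((t + j) ^ 2)⁻¹

noncomputable def F3 (N : ℕ) (t : ℝ) : ℝ := ∑ j ∈ range (N + 1), (-2) * ((t + j) ^ 3)⁻¹

noncomputable def G (x : ℝ) : ℝ :=
  -Real.eulerMascheroniConstant - x⁻¹ + ∑' j : ℕ, (((j:ℝ) + 1)⁻¹ - (x + j + 1)⁻¹)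

lemma F1_eq (N : ℕ) (t : ℝ) (ht : t ≠ 0) :
    F1 N t = Real.log N - ∑ j ∈ range (N + 1), (t + j)⁻¹ := by
  rw [F1, Finset.sum_range_succ' (fun j => (t + j)⁻¹) N, Finset.sum_sub_distrib]
  have h : ∀ j ∈ range N, (t + ((j + 1 : ℕ) : ℝ))⁻¹ = (t + j + 1)⁻¹ := by
    intro j _; push_cast; ring_nf
  rw [Finset.sum_congr rfl h]
  push_cast
  ring

lemma hF (N : ℕ) (t : ℝ) (ht : 0 < t) : HasDerivAt (Fs N) (F1 N t) t := by
  rw [F1_eq N t ht.ne']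
  have h1 : ∀ j ∈ range (N + 1), HasDerivAt (fun s : ℝ => Real.log (s + j)) ((t + j)⁻¹) t := by
    intro j _
    have hj : t + (j : ℝ) ≠ 0 := by positivity
    simpa [Function.comp_def] using (Real.hasDerivAt_log hj).comp t ((hasDerivAt_id t).add_const (j : ℝ))
  have h2 : HasDerivAt (fun s : ℝ => ∑ j ∈ range (N + 1), Real.log (s + j))
      (∑ j ∈ range (N + 1), (t + j)⁻¹) t := HasDerivAt.fun_sum h1
  unfold Fs
  simpa [Pi.sub_def] using ((hasDerivAt_mul_const (Real.log N)).add_const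
    (∑ j ∈ range N, Real.log ((j:ℝ) + 1))).sub h2

lemma hF1 (N : ℕ) (t : ℝ) (ht : 0 < t) : HasDerivAt (F1 N) (F2 N t) t := by
  have hinv : HasDerivAt (fun s : ℝ => s⁻¹) (-((t ^ 2)⁻¹)) t := by
    simpa using hasDerivAt_inv ht.ne'
  have h1 : ∀ j ∈ range N, HasDerivAt (fun s : ℝ => ((j:ℝ) + 1)⁻¹ - (s + j + 1)⁻¹)
      (((t + j + 1) ^ 2)⁻¹) t := by
    intro j _
    have hj : t + (j : ℝ) + 1 ≠ 0 := by positivity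
    have := (hasDerivAt_inv hj).comp t (((hasDerivAt_id t).add_const ((j : ℝ))).add_const 1)
    simpa using (this.const_sub (((j:ℝ) + 1)⁻¹))
  have h2 : HasDerivAt (fun s : ℝ => ∑ j ∈ range N, (((j:ℝ) + 1)⁻¹ - (s + j + 1)⁻¹))
      (∑ j ∈ range N, ((t + j + 1) ^ 2)⁻¹) t := HasDerivAt.fun_sum h1
  have h3 := ((hasDerivAt_const t (Real.log N - ∑ j ∈ range N, ((j:ℝ) + 1)⁻¹)).sub hinv).add h2
  have he : F2 N t = (0 - -(t ^ 2)⁻¹) + ∑ j ∈ range N, ((t + j + 1) ^ 2)⁻¹ := by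
    rw [F2, Finset.sum_range_succ' (fun j => ((t + j) ^ 2)⁻¹) N]
    have h : ∀ j ∈ range N, (((t + ((j + 1 : ℕ) : ℝ)) ^ 2)⁻¹) = ((t + j + 1) ^ 2)⁻¹ := by
      intro j _; push_cast; ring_nf
    rw [Finset.sum_congr rfl h]
    push_cast
    ring
  rw [he]
  exact h3

lemma hF2 (N : ℕ) (t : ℝ) (ht : 0 < t) : HasDerivAt (F2 N) (F3 N t) t := by
  have h1 : ∀ j ∈ range (N + 1), HasDerivAt (fun s : ℝ => ((s + j) ^ 2)⁻¹)
      ((-2) * ((t + j) ^ 3)⁻¹) t := by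
    intro j _
    have hj : (0:ℝ) < t + j := by positivity
    have hpow : HasDerivAt (fun s : ℝ => (s + (j:ℝ)) ^ 2) (2 * (t + j)) t := by
      simpa [Pi.pow_def] using ((hasDerivAt_id t).add_const ((j : ℝ))).pow 2
    have := hpow.fun_inv (by positivity)
    refine this.congr_deriv ?_
    field_simp [hj.ne']
  exact HasDerivAt.fun_sum h1

lemma log_GammaSeq (t : ℝ) (ht : 0 < t) (N : ℕ) (hN : 1 ≤ N) :
    Real.log (Real.GammaSeq t N) = Fs N t := by
  have hN0 : (0:ℝ) < N := by exact_mod_cast hN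
  have hprod : (0:ℝ) < ∏ j ∈ range (N + 1), (t + j) := by
    refine Finset.prod_pos fun j _ => by positivity
  have hfac : (0:ℝ) < (N.factorial : ℝ) := by exact_mod_cast N.factorial_pos
  have hrpow : (0:ℝ) < (N:ℝ) ^ t := Real.rpow_pos_of_pos hN0 t
  rw [Real.GammaSeq, Real.log_div (by positivity) hprod.ne', Real.log_mul hrpow.ne' hfac.ne',
    Real.log_rpow hN0, Real.log_prod (fun j _ => by positivity)]
  have hfac2 : Real.log (N.factorial : ℝ) = ∑ j ∈ range N, Real.log ((j:ℝ) + 1) := by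
    rw [← Finset.prod_range_add_one_eq_factorial]
    push_cast
    rw [Real.log_prod (fun j _ => by positivity)]
  rw [hfac2, Fs]

lemma pF (t : ℝ) (ht : 0 < t) :
    Tendsto (fun N => Fs N t) atTop (𝓝 (Real.log (Real.Gamma t))) := by
  have hG : (0:ℝ) < Real.Gamma t := Real.Gamma_pos_of_pos ht
  have h1 : Tendsto (fun N => Real.log (Real.GammaSeq t N)) atTop
      (𝓝 (Real.log (Real.Gamma t))) :=
    ((Real.continuousAt_log hG.ne').tendsto).comp (Real.GammaSeq_tendsto_Gamma t)
  refine h1.congr' ?_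
  filter_upwards [eventually_ge_atTop 1] with N hN
  exact log_GammaSeq t ht N hN

lemma log_succ_sub_log : Tendsto (fun n : ℕ => Real.log ((n:ℝ) + 1) - Real.log n)
    atTop (𝓝 0) := by
  have h0 : Tendsto (fun n : ℕ => ((n:ℝ))⁻¹) atTop (𝓝 0) :=
    tendsto_inv_atTop_zero.comp tendsto_natCast_atTop_atTop
  have h1 : Tendsto (fun n : ℕ => 1 + (n:ℝ)⁻¹) atTop (𝓝 1) := by
    simpa using ((tendsto_const_nhds : Tendsto (fun _ : ℕ => (1:ℝ)) atTop (𝓝 1)).add h0)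
  have h2 : Tendsto (fun n : ℕ => Real.log (1 + (n:ℝ)⁻¹)) atTop (𝓝 0) := by
    have := (Real.continuousAt_log one_ne_zero).tendsto.comp h1
    simpa [Function.comp_def] using this
  refine h2.congr' ?_
  filter_upwards [eventually_ge_atTop 1] with n hn
  have hn0 : (0:ℝ) < n := by exact_mod_cast hn
  rw [← Real.log_div (by positivity) hn0.ne']
  congr 1
  field_simp

lemma tendsto_cN : Tendsto (fun N : ℕ => Real.log N - ∑ j ∈ range N, ((j:ℝ) + 1)⁻¹)
    atTop (𝓝 (-Real.eulerMascheroniConstant)) := by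
  have h1 := Real.tendsto_eulerMascheroniSeq
  have h2 : ∀ N : ℕ, Real.log N - ∑ j ∈ range N, ((j:ℝ) + 1)⁻¹ =
      -(Real.eulerMascheroniSeq N) - (Real.log ((N:ℝ) + 1) - Real.log N) := by
    intro N
    rw [Real.eulerMascheroniSeq]
    have : ((harmonic N : ℚ) : ℝ) = ∑ j ∈ range N, ((j:ℝ) + 1)⁻¹ := by
      rw [harmonic]
      push_cast
      rfl
    rw [this]
    ring
  simp only [h2]
  simpa using (h1.neg).sub log_succ_sub_log

lemma tuo_refl {g : ℝ → ℝ} {s : Set ℝ} : TendstoUniformlyOn (fun _ : ℕ => g) g atTop s :=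
  fun u hu => Eventually.of_forall (fun _ t _ => refl_mem_uniformity hu)

lemma tuo_shift {f : ℕ → ℝ → ℝ} {g : ℝ → ℝ} {s : Set ℝ}
    (h : TendstoUniformlyOn f g atTop s) :
    TendstoUniformlyOn (fun N => f (N + 1)) g atTop s :=
  fun u hu => (tendsto_add_atTop_nat 1).eventually (h u hu)

lemma uF1 (x : ℝ) (hx : 0 < x) :
    TendstoUniformlyOn F1 G atTop (Ioo (x/2) (x+1)) := by
  have hA1 := tendsto_cN.tendstoUniformlyOn_const (Ioo (x/2) (x+1))
  have hA2 : TendstoUniformlyOn (fun (_ : ℕ) (t : ℝ) => -t⁻¹) (fun t => -t⁻¹) atTop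
      (Ioo (x/2) (x+1)) := tuo_refl
  have hu : Summable (fun j : ℕ => (x+1) * (((j:ℝ) + 1) ^ 2)⁻¹) := sumBase.mul_left _
  have hA3 := tendstoUniformlyOn_tsum_nat (f := fun (j : ℕ) (t : ℝ) =>
      ((j:ℝ) + 1)⁻¹ - (t + j + 1)⁻¹) hu (s := Ioo (x/2) (x+1)) ?_
  · have hcomb := (hA1.add hA2).add hA3
    refine (hcomb.congr ?_).congr_right ?_
    · refine Eventually.of_forall (fun N t _ => ?_)
      simp only [Pi.add_apply, F1, sub_eq_add_neg]
    · intro t _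
      simp only [Pi.add_apply, G, sub_eq_add_neg]
  · intro j t ht
    show ‖((j:ℝ) + 1)⁻¹ - (t + j + 1)⁻¹‖ ≤ (x+1) * (((j:ℝ) + 1) ^ 2)⁻¹
    have ht1 : x/2 < t := ht.1
    have ht2 : t < x + 1 := ht.2
    have ht0 : 0 < t := by linarith
    have hj : (0:ℝ) < (j:ℝ) + 1 := by positivity
    have hsub : (t + j + 1)⁻¹ ≤ ((j:ℝ) + 1)⁻¹ :=
      inv_anti₀ hj (by linarith)
    rw [Real.norm_eq_abs, abs_of_nonneg (by linarith)]
    have e : ((j:ℝ) + 1)⁻¹ - (t + j + 1)⁻¹ = t / (((j:ℝ) + 1) * (t + j + 1)) := by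
      field_simp
      ring
    have e2 : (x+1) * (((j:ℝ) + 1) ^ 2)⁻¹ = (x+1) / (((j:ℝ) + 1) ^ 2) := by
      ring
    rw [e, e2]
    have hB : ((j:ℝ) + 1) ^ 2 ≤ ((j:ℝ) + 1) * (t + j + 1) := by nlinarith
    exact div_le_div₀ (by linarith) (by linarith) (by positivity) hB

lemma uF2 (x : ℝ) (hx : 0 < x) :
    TendstoUniformlyOn F2 T2 atTop (Ioo (x/2) (x+1)) := by
  have hb := tendstoUniformlyOn_tsum_nat (f := fun (j : ℕ) (t : ℝ) => ((t + j) ^ 2)⁻¹)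
      (summable_aux (x/2) (half_pos hx) 2 le_rfl) (s := Ioo (x/2) (x+1)) ?_
  · exact (tuo_shift hb).congr_right (fun t _ => rfl)
  · intro j t ht
    show ‖((t + (j:ℝ)) ^ 2)⁻¹‖ ≤ ((x/2 + (j:ℝ)) ^ 2)⁻¹
    have ht1 : x/2 < t := ht.1
    rw [Real.norm_eq_abs, abs_of_nonneg (by positivity)]
    have h0 : (0:ℝ) < x/2 + j := by positivity
    refine inv_anti₀ (by positivity) ?_
    exact pow_le_pow_left₀ h0.le (by linarith) 2

lemma uF3 (x : ℝ) (hx : 0 < x) :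
    TendstoUniformlyOn F3 (fun t => -2 * T3 t) atTop (Ioo (x/2) (x+1)) := by
  have hb := tendstoUniformlyOn_tsum_nat (f := fun (j : ℕ) (t : ℝ) => (-2) * ((t + j) ^ 3)⁻¹)
      ((summable_aux (x/2) (half_pos hx) 3 (by norm_num)).mul_left 2) (s := Ioo (x/2) (x+1)) ?_
  · refine (tuo_shift hb).congr_right (fun t _ => ?_)
    beta_reduce
    rw [tsum_mul_left]
    norm_num [T3]
  · intro j t ht
    show ‖(-2) * ((t + (j:ℝ)) ^ 3)⁻¹‖ ≤ 2 * ((x/2 + (j:ℝ)) ^ 3)⁻¹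
    have ht1 : x/2 < t := ht.1
    have h0 : (0:ℝ) < x/2 + j := by positivity
    have h0t : (0:ℝ) < t + j := by linarith
    rw [Real.norm_eq_abs, abs_mul]
    rw [abs_of_nonneg (by positivity : (0:ℝ) ≤ ((t + (j:ℝ)) ^ 3)⁻¹)]
    norm_num
    refine inv_anti₀ (by positivity) ?_
    exact pow_le_pow_left₀ h0.le (by linarith) 3

theorem hasDerivAt_logGamma {x : ℝ} (hx : 0 < x) :
    HasDerivAt (fun t => Real.log (Real.Gamma t)) (G x) x := by
  have hmem : x ∈ Ioo (x/2) (x+1) := ⟨by linarith, by linarith⟩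
  refine hasDerivAt_of_tendstoUniformlyOn (f := Fs) isOpen_Ioo (uF1 x hx) ?_ ?_ hmem
  · exact Eventually.of_forall (fun N t ht => hF N t (by linarith [ht.1]))
  · exact fun t ht => pF t (by linarith [ht.1])

theorem hasDerivAt_G {x : ℝ} (hx : 0 < x) : HasDerivAt G (T2 x) x := by
  have hmem : x ∈ Ioo (x/2) (x+1) := ⟨by linarith, by linarith⟩
  refine hasDerivAt_of_tendstoUniformlyOn (f := F1) isOpen_Ioo (uF2 x hx) ?_ ?_ hmem
  · exact Eventually.of_forall (fun N t ht => hF1 N t (by linarith [ht.1]))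
  · exact fun t ht => (uF1 x hx).tendsto_at ht

theorem hasDerivAt_T2 {x : ℝ} (hx : 0 < x) : HasDerivAt T2 (-2 * T3 x) x := by
  have hmem : x ∈ Ioo (x/2) (x+1) := ⟨by linarith, by linarith⟩
  refine hasDerivAt_of_tendstoUniformlyOn (f := F2) isOpen_Ioo (uF3 x hx) ?_ ?_ hmem
  · exact Eventually.of_forall (fun N t ht => hF2 N t (by linarith [ht.1]))
  · exact fun t ht => (uF2 x hx).tendsto_at ht


lemma phi_anti : AntitoneOn (fun y => y * T2 y) (Set.Ioi (0:ℝ)) := by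
  have hd : ∀ y ∈ Set.Ioi (0:ℝ), HasDerivAt (fun y => y * T2 y)
      (1 * T2 y + y * (-2 * T3 y)) y :=
    fun y hy => (hasDerivAt_id y).mul (hasDerivAt_T2 hy)
  refine antitoneOn_of_deriv_nonpos (convex_Ioi 0) ?_ ?_ ?_
  · exact fun y hy => ((hd y hy).continuousAt).continuousWithinAt
  · rw [interior_Ioi]
    exact fun y hy => ((hd y hy).differentiableAt).differentiableWithinAt
  · rw [interior_Ioi]
    intro y hy
    rw [(hd y hy).deriv]
    have hk := key y hy
    have hy0 : (0:ℝ) < y := hy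
    nlinarith

lemma tangent {I t : ℝ} (hI : 0 < I) (ht : 0 < t) :
    G t ≤ G I + (I * T2 I) * (Real.log t - Real.log I) := by
  have hg : ∀ s : ℝ, HasDerivAt (fun s => G (Real.exp s))
      (Real.exp s * T2 (Real.exp s)) s := by
    intro s
    have := (hasDerivAt_G (Real.exp_pos s)).comp s (Real.hasDerivAt_exp s)
    simpa [mul_comm, Function.comp_def] using this
  set u := Real.log t with hu
  set v := Real.log I with hv
  have hut : Real.exp u = t := Real.exp_log ht
  have hvI : Real.exp v = I := Real.exp_log hI
  rcases lt_trichotomy u v with h | h | h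
  · obtain ⟨c, hc, hceq⟩ := exists_hasDerivAt_eq_slope (fun s => G (Real.exp s))
      (fun s => Real.exp s * T2 (Real.exp s)) h
      (fun s _ => (hg s).continuousAt.continuousWithinAt) (fun s _ => hg s)
    have hmono : Real.exp v * T2 (Real.exp v) ≤ Real.exp c * T2 (Real.exp c) :=
      phi_anti (Set.mem_Ioi.2 (Real.exp_pos c)) (Set.mem_Ioi.2 (Real.exp_pos v))
        (Real.exp_le_exp.mpr hc.2.le)
    rw [eq_div_iff (ne_of_gt (sub_pos.2 h))] at hceq
    rw [hut, hvI] at hceq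
    rw [hvI] at hmono
    have h2 := mul_le_mul_of_nonneg_right hmono (by linarith : (0:ℝ) ≤ v - u)
    nlinarith
  · have htI : t = I := by rw [← hut, ← hvI, h]
    rw [htI, h]
    simp
  · obtain ⟨c, hc, hceq⟩ := exists_hasDerivAt_eq_slope (fun s => G (Real.exp s))
      (fun s => Real.exp s * T2 (Real.exp s)) h
      (fun s _ => (hg s).continuousAt.continuousWithinAt) (fun s _ => hg s)
    have hmono : Real.exp c * T2 (Real.exp c) ≤ Real.exp v * T2 (Real.exp v) :=
      phi_anti (Set.mem_Ioi.2 (Real.exp_pos v)) (Set.mem_Ioi.2 (Real.exp_pos c))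
        (Real.exp_le_exp.mpr hc.1.le)
    rw [eq_div_iff (ne_of_gt (sub_pos.2 h))] at hceq
    rw [hut, hvI] at hceq
    rw [hvI] at hmono
    have h2 := mul_le_mul_of_nonneg_right hmono (by linarith : (0:ℝ) ≤ u - v)
    nlinarith

lemma main_lt {b a : ℝ} (hb : 0 < b) (hba : b < a) :
    Real.log (Real.Gamma a) - Real.log (Real.Gamma b) ≤
      (a - b) * G (Real.exp ((a * Real.log a - b * Real.log b) / (a - b) - 1)) := by
  set m := (a * Real.log a - b * Real.log b) / (a - b) - 1 with hm
  set I := Real.exp m with hIdef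
  have hI : 0 < I := Real.exp_pos m
  have hpos : ∀ t ∈ Set.uIcc b a, (0:ℝ) < t := by
    intro t htm
    rw [Set.uIcc_of_le hba.le] at htm
    linarith [htm.1]
  have hGcont : ContinuousOn G (Set.uIcc b a) :=
    fun t htm => ((hasDerivAt_G (hpos t htm)).continuousAt).continuousWithinAt
  have hftc : ∫ t in b..a, G t =
      Real.log (Real.Gamma a) - Real.log (Real.Gamma b) := by
    refine intervalIntegral.integral_eq_sub_of_hasDerivAt
      (fun t htm => hasDerivAt_logGamma (hpos t htm)) ?_
    exact hGcont.intervalIntegrable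
  have hlogcont : ContinuousOn (fun t : ℝ => Real.log t) (Set.uIcc b a) := by
    refine Real.continuousOn_log.mono ?_
    intro t htm
    exact Set.mem_compl_singleton_iff.mpr (ne_of_gt (hpos t htm))
  have hlogint : IntervalIntegrable (fun t : ℝ => Real.log t) MeasureTheory.volume b a :=
    hlogcont.intervalIntegrable
  have haffint : IntervalIntegrable
      (fun t : ℝ => G I + (I * T2 I) * (Real.log t - m)) MeasureTheory.volume b a := by
    refine ContinuousOn.intervalIntegrable ?_
    exact continuousOn_const.add (continuousOn_const.mul (hlogcont.sub continuousOn_const))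
  have hmono : ∫ t in b..a, G t ≤
      ∫ t in b..a, (G I + (I * T2 I) * (Real.log t - m)) := by
    refine intervalIntegral.integral_mono_on hba.le hGcont.intervalIntegrable haffint ?_
    intro t htm
    have ht : 0 < t := by
      have := htm.1
      linarith
    have := tangent hI ht
    rwa [hIdef, Real.log_exp] at this
  have hcomp : ∫ t in b..a, (G I + (I * T2 I) * (Real.log t - m)) = (a - b) * G I := by
    rw [intervalIntegral.integral_add intervalIntegrable_const
      ((hlogint.sub intervalIntegrable_const).const_mul _),
      intervalIntegral.integral_const_mul,
      intervalIntegral.integral_sub hlogint intervalIntegrable_const,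
      intervalIntegral.integral_const, intervalIntegral.integral_const]
    have h0 : (0:ℝ) ∉ Set.uIcc b a := fun hmem => absurd (hpos 0 hmem) (lt_irrefl 0)
    have hlog : ∫ t in b..a, Real.log t = a * Real.log a - b * Real.log b - a + b := by
      rw [integral_log]
    rw [hlog]
    have hab : a - b ≠ 0 := by linarith
    have hmm : (a - b) * m = a * Real.log a - b * Real.log b - a + b := by
      rw [hm]
      field_simp
      ring
    rw [smul_eq_mul, smul_eq_mul]
    linear_combination (-(I * T2 I)) * hmm
  calc Real.log (Real.Gamma a) - Real.log (Real.Gamma b) = ∫ t in b..a, G t := hftc.symm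
    _ ≤ ∫ t in b..a, (G I + (I * T2 I) * (Real.log t - m)) := hmono
    _ = (a - b) * G I := hcomp

end Stmt16

theorem stmt_16 (a b : ℝ) (ha : 0 < a) (hb : 0 < b) (hab : a ≠ b) :
    (Real.Gamma a / Real.Gamma b) ^ (1 / (a - b)) ≤
      Real.exp (psi ((1 / Real.exp 1) * (b ^ b / a ^ a) ^ (1 / (b - a)))) := by
  have hΓa : 0 < Real.Gamma a := Real.Gamma_pos_of_pos ha
  have hΓb : 0 < Real.Gamma b := Real.Gamma_pos_of_pos hb
  have hpsiG : ∀ x : ℝ, 0 < x → psi x = Stmt16.G x := fun x hx =>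
    (Stmt16.hasDerivAt_logGamma hx).deriv
  have hab' : a - b ≠ 0 := sub_ne_zero.2 hab
  have hba' : b - a ≠ 0 := sub_ne_zero.2 (fun h => hab h.symm)
  set m := (a * Real.log a - b * Real.log b) / (a - b) - 1 with hm
  have hIs : (1 / Real.exp 1) * (b ^ b / a ^ a) ^ (1 / (b - a)) = Real.exp m := by
    have hbb : (0:ℝ) < b ^ b := Real.rpow_pos_of_pos hb b
    have haa : (0:ℝ) < a ^ a := Real.rpow_pos_of_pos ha a
    rw [Real.rpow_def_of_pos (div_pos hbb haa), Real.log_div hbb.ne' haa.ne',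
      Real.log_rpow hb, Real.log_rpow ha]
    rw [one_div (Real.exp 1), ← Real.exp_neg, ← Real.exp_add]
    congr 1
    rw [hm]
    field_simp
    ring
  rw [hIs, hpsiG _ (Real.exp_pos m)]
  rw [Real.rpow_def_of_pos (div_pos hΓa hΓb)]
  rw [Real.exp_le_exp, Real.log_div hΓa.ne' hΓb.ne', mul_one_div]
  rcases lt_or_gt_of_ne hab with h | h
  · have hmm : (b * Real.log b - a * Real.log a) / (b - a) - 1 = m := by
      rw [hm, ← neg_sub (a * Real.log a) (b * Real.log b), ← neg_sub a b, neg_div_neg_eq]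
    have h1 := Stmt16.main_lt ha h
    rw [hmm] at h1
    rw [div_le_iff_of_neg (sub_neg.2 h)]
    linarith
  · have h1 := Stmt16.main_lt hb h
    rw [div_le_iff₀ (sub_pos.2 h)]
    linarith
end
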